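/- Let d ≥ 1 be an integer and let G : (0,∞) × ℝ^d → ℝ satisfy the scaling property G(t,x) = t^{γ₁} · G(1, x / t^{γ₂}) for all t > 0 and x ∈ ℝ^d, for some constants γ₁ ∈ ℝ and γ₂ ≥ 1/2, and suppose C₀ := sup_{x ∈ ℝ^d} G(1,x)² / 𝒢_g(1,x) is finite. Then with σ = −(2γ₁ + d·γ₂): (a) G(t,x)² ≤ C₀ · t^{−σ} · 𝒢_g(t^{2γ₂}, x) for all t > 0, x ∈ ℝ^d; and (b) ∫_{ℝ^d} 𝒢_g(t^{2γ₂}, x−y) · 𝒢_g(s^{2γ₂}, y) dy ≤ 2^{d(γ₂ − 1/2)} · 𝒢_g((t+s)^{2γ₂}, x) for all t, s > 0 and x ∈ ℝ^d. -/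

import Mathlib

open MeasureTheory

/-- The Gaussian reference kernel `𝒢_g(t,x) = (4π t)^{−d/2} exp(−|x|²/(4t))` on `ℝ^d`. -/
noncomputable def gaussKernel (d : ℕ) (t : ℝ) (x : Fin d → ℝ) : ℝ :=
  (4 * Real.pi * t) ^ (-(d : ℝ) / 2) * Real.exp (-(∑ i, x i ^ 2) / (4 * t))

/-!
Part (a) is the scaling relation for `G` combined with the parabolic scaling
`𝒢_g(1, x/c) = c^d 𝒢_g(c², x)` of the kernel. For part (b), the Gaussian kernels form a
convolution semigroup (a one-dimensional Gaussian integral in each coordinate, after completing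
the square), so the integral is `𝒢_g(t^p + s^p, x)` with `p = 2γ₂ ≥ 1`. Raising the time from
`A` to `B ≤ kA` costs at most a factor `k^{d/2}`, and `t^p + s^p ≤ (t+s)^p ≤ 2^{p-1}(t^p + s^p)`.
-/

open Real Finset

theorem Real.rpow_add_le_mul_rpow_add_rpow {a b p : ℝ} (ha : 0 ≤ a) (hb : 0 ≤ b) (hp : 1 ≤ p) :
    (a + b) ^ p ≤ 2 ^ (p - 1) * (a ^ p + b ^ p) := by
  lift a to NNReal using ha
  lift b to NNReal using hb
  exact_mod_cast NNReal.rpow_add_le_mul_rpow_add_rpow a b hp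

theorem le_ciSup_div_mul {α : Type*} {f g : α → ℝ} (hbdd : BddAbove (Set.range fun x => f x / g x))
    {y : α} (hy : 0 < g y) : f y ≤ (⨆ x, f x / g x) * g y :=
  (div_le_iff₀ hy).1 (le_ciSup hbdd y)

theorem gaussKernel_pos (d : ℕ) {t : ℝ} (ht : 0 < t) (x : Fin d → ℝ) : 0 < gaussKernel d t x := by
  unfold gaussKernel
  positivity

noncomputable def heatKernel₁ (t u : ℝ) : ℝ :=
  (4 * π * t) ^ (-(1 : ℝ) / 2) * exp (-(u ^ 2) / (4 * t))

theorem gaussKernel_eq_prod (d : ℕ) {t : ℝ} (ht : 0 < t) (x : Fin d → ℝ) :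
    gaussKernel d t x = ∏ i, heatKernel₁ t (x i) := by
  have hprefactor : (4 * π * t) ^ (-(d : ℝ) / 2) = ((4 * π * t) ^ (-(1 : ℝ) / 2)) ^ d := by
    rw [← rpow_natCast, ← rpow_mul (by positivity)]
    ring_nf
  rw [gaussKernel, hprefactor]
  simp only [heatKernel₁, prod_mul_distrib, prod_const, card_univ, Fintype.card_fin, ← exp_sum,
    neg_div, ← sum_div, sum_neg_distrib]

theorem integral_heatKernel₁_mul {a b : ℝ} (ha : 0 < a) (hb : 0 < b) (u : ℝ) :
    ∫ y, heatKernel₁ a (u - y) * heatKernel₁ b y = heatKernel₁ (a + b) u := by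
  set c := (a + b) / (4 * a * b)
  -- completing the square in `y`
  have hsquare : ∀ y, heatKernel₁ a (u - y) * heatKernel₁ b y
      = ((4 * π * a) ^ (-(1 : ℝ) / 2) * (4 * π * b) ^ (-(1 : ℝ) / 2)
          * exp (-(u ^ 2) / (4 * (a + b)))) * exp (-c * (y - b * u / (a + b)) ^ 2) := by
    intro y
    rw [heatKernel₁, heatKernel₁, mul_mul_mul_comm, ← exp_add, mul_assoc _ (exp _), ← exp_add]
    congr 2
    simp only [c]
    field_simp
    ring
  have hrpow : ∀ z : ℝ, 0 ≤ z → z ^ (-(1 : ℝ) / 2) = √z⁻¹ := fun z hz => by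
    rw [neg_div, rpow_neg hz, sqrt_eq_rpow, inv_rpow hz]
  have hconst : (4 * π * a) ^ (-(1 : ℝ) / 2) * (4 * π * b) ^ (-(1 : ℝ) / 2) * √(π / c)
      = (4 * π * (a + b)) ^ (-(1 : ℝ) / 2) := by
    rw [hrpow _ (by positivity), hrpow _ (by positivity), hrpow _ (by positivity),
      ← sqrt_mul (by positivity), ← sqrt_mul (by positivity)]
    congr 1
    simp only [c]
    field_simp
  simp_rw [hsquare]
  rw [integral_const_mul, integral_sub_right_eq_self (fun z => exp (-c * z ^ 2)),
    integral_gaussian, heatKernel₁, ← hconst]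
  ring

theorem integral_gaussKernel_mul {d : ℕ} {a b : ℝ} (ha : 0 < a) (hb : 0 < b) (x : Fin d → ℝ) :
    ∫ y, gaussKernel d a (x - y) * gaussKernel d b y = gaussKernel d (a + b) x := by
  simp_rw [gaussKernel_eq_prod d ha, gaussKernel_eq_prod d hb, ← prod_mul_distrib, Pi.sub_apply]
  rw [integral_fintype_prod_volume_eq_prod (fun i v => heatKernel₁ a (x i - v) * heatKernel₁ b v),
    gaussKernel_eq_prod d (add_pos ha hb)]
  exact prod_congr rfl fun i _ => integral_heatKernel₁_mul ha hb (x i)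

theorem gaussKernel_le_rpow_mul {d : ℕ} {A B k : ℝ} (hA : 0 < A) (hAB : A ≤ B) (hBk : B ≤ k * A)
    (x : Fin d → ℝ) : gaussKernel d A x ≤ k ^ ((d : ℝ) / 2) * gaussKernel d B x := by
  have hB : 0 < B := hA.trans_le hAB
  have hk : 0 < k := pos_of_mul_pos_left (hB.trans_le hBk) hA.le
  have hprefactor :
      (4 * π * A) ^ (-(d : ℝ) / 2) ≤ k ^ ((d : ℝ) / 2) * (4 * π * B) ^ (-(d : ℝ) / 2) := by
    rw [neg_div, rpow_neg (by positivity), rpow_neg (by positivity), ← inv_rpow (by positivity),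
      ← inv_rpow (by positivity), ← mul_rpow hk.le (by positivity)]
    gcongr
    rw [← div_eq_mul_inv, le_div_iff₀ (by positivity), inv_mul_le_iff₀ (by positivity)]
    nlinarith [pi_pos]
  have hexp : exp (-(∑ i, x i ^ 2) / (4 * A)) ≤ exp (-(∑ i, x i ^ 2) / (4 * B)) := by
    rw [exp_le_exp, neg_div, neg_div, neg_le_neg_iff]
    gcongr
  rw [gaussKernel, gaussKernel, ← mul_assoc]
  gcongr

theorem gaussKernel_one_inv_smul (d : ℕ) {c : ℝ} (hc : 0 < c) (x : Fin d → ℝ) :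
    gaussKernel d 1 (c⁻¹ • x) = c ^ (d : ℝ) * gaussKernel d (c ^ 2) x := by
  have hprefactor :
      (4 * π * 1) ^ (-(d : ℝ) / 2) = c ^ (d : ℝ) * (4 * π * c ^ 2) ^ (-(d : ℝ) / 2) := by
    have hc2 : (c ^ 2) ^ (-(d : ℝ) / 2) = (c ^ (d : ℝ))⁻¹ := by
      rw [← rpow_natCast, ← rpow_mul hc.le, ← rpow_neg hc.le]
      ring_nf
    rw [mul_one, mul_rpow (x := 4 * π) (y := c ^ 2) (by positivity) (by positivity), hc2]
    field_simp
  have hexponent : -(∑ i, (c⁻¹ • x) i ^ 2) / (4 * 1) = -(∑ i, x i ^ 2) / (4 * c ^ 2) := by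
    simp only [Pi.smul_apply, smul_eq_mul, mul_pow, ← mul_sum]
    field_simp
  rw [gaussKernel, gaussKernel, hprefactor, hexponent, mul_assoc]

theorem gaussian_reference_kernel_general (d : ℕ)
    (G : ℝ → (Fin d → ℝ) → ℝ) (γ₁ γ₂ : ℝ) (hγ₂ : 1 / 2 ≤ γ₂)
    (hscal : ∀ t : ℝ, 0 < t → ∀ x, G t x = t ^ γ₁ * G 1 ((t ^ γ₂)⁻¹ • x))
    (hbdd : BddAbove (Set.range fun x : Fin d → ℝ => G 1 x ^ 2 / gaussKernel d 1 x))
    (C₀ σ : ℝ)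
    (hC₀ : C₀ = ⨆ x : Fin d → ℝ, G 1 x ^ 2 / gaussKernel d 1 x)
    (hσ : σ = -(2 * γ₁ + (d : ℝ) * γ₂)) :
    (∀ t : ℝ, 0 < t → ∀ x : Fin d → ℝ,
      G t x ^ 2 ≤ C₀ * t ^ (-σ) * gaussKernel d (t ^ (2 * γ₂)) x) ∧
    (∀ t s : ℝ, 0 < t → 0 < s → ∀ x : Fin d → ℝ,
      (∫ y : Fin d → ℝ, gaussKernel d (t ^ (2 * γ₂)) (x - y) * gaussKernel d (s ^ (2 * γ₂)) y)
        ≤ (2 : ℝ) ^ ((d : ℝ) * (γ₂ - 1 / 2)) * gaussKernel d ((t + s) ^ (2 * γ₂)) x) := by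
  constructor
  · intro t ht x
    have htime : (t ^ γ₂) ^ 2 = t ^ (2 * γ₂) := by
      rw [← rpow_natCast, ← rpow_mul ht.le, mul_comm]
      norm_num
    have hpow : t ^ (-σ) = (t ^ γ₁) ^ 2 * (t ^ γ₂) ^ (d : ℝ) := by
      rw [hσ, neg_neg, ← rpow_natCast, ← rpow_mul ht.le, ← rpow_mul ht.le, ← rpow_add ht]
      ring_nf
    calc G t x ^ 2 = (t ^ γ₁) ^ 2 * G 1 ((t ^ γ₂)⁻¹ • x) ^ 2 := by rw [hscal t ht x, mul_pow]
      _ ≤ (t ^ γ₁) ^ 2 * (C₀ * gaussKernel d 1 ((t ^ γ₂)⁻¹ • x)) := by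
        rw [hC₀]
        gcongr
        exact le_ciSup_div_mul hbdd (gaussKernel_pos d one_pos _)
      _ = C₀ * t ^ (-σ) * gaussKernel d (t ^ (2 * γ₂)) x := by
        rw [gaussKernel_one_inv_smul d (rpow_pos_of_pos ht γ₂), htime, hpow]
        ring
  · intro t s ht hs x
    have hp : 1 ≤ 2 * γ₂ := by linarith
    have hconst : ((2 : ℝ) ^ (2 * γ₂ - 1)) ^ ((d : ℝ) / 2) = 2 ^ ((d : ℝ) * (γ₂ - 1 / 2)) := by
      rw [← rpow_mul zero_le_two]
      ring_nf
    rw [integral_gaussKernel_mul (rpow_pos_of_pos ht _) (rpow_pos_of_pos hs _), ← hconst]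
    exact gaussKernel_le_rpow_mul (by positivity) (add_rpow_le_rpow_add ht.le hs.le hp)
      (Real.rpow_add_le_mul_rpow_add_rpow ht.le hs.le hp) x

/-- if `G(t,x) = t^{γ₁} G(1, x/t^{γ₂})` with `γ₂ ≥ 1/2`, and
`C₀ = sup_x G(1,x)²/𝒢_g(1,x)` is finite, then with `σ = −(2γ₁ + dγ₂)`:
(a) `G(t,x)² ≤ C₀ t^{−σ} 𝒢_g(t^{2γ₂}, x)`; and
(b) `∫ 𝒢_g(t^{2γ₂}, x−y) 𝒢_g(s^{2γ₂}, y) dy ≤ 2^{d(γ₂−1/2)} 𝒢_g((t+s)^{2γ₂}, x)`. -/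
theorem gaussian_reference_kernel (d : ℕ) (hd : 1 ≤ d)
    (G : ℝ → (Fin d → ℝ) → ℝ) (γ₁ γ₂ : ℝ) (hγ₂ : 1 / 2 ≤ γ₂)
    (hscal : ∀ t : ℝ, 0 < t → ∀ x, G t x = t ^ γ₁ * G 1 ((t ^ γ₂)⁻¹ • x))
    (hbdd : BddAbove (Set.range fun x : Fin d → ℝ => G 1 x ^ 2 / gaussKernel d 1 x))
    (C₀ σ : ℝ)
    (hC₀ : C₀ = ⨆ x : Fin d → ℝ, G 1 x ^ 2 / gaussKernel d 1 x)
    (hσ : σ = -(2 * γ₁ + (d : ℝ) * γ₂)) :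
    (∀ t : ℝ, 0 < t → ∀ x : Fin d → ℝ,
      G t x ^ 2 ≤ C₀ * t ^ (-σ) * gaussKernel d (t ^ (2 * γ₂)) x) ∧
    (∀ t s : ℝ, 0 < t → 0 < s → ∀ x : Fin d → ℝ,
      (∫ y : Fin d → ℝ, gaussKernel d (t ^ (2 * γ₂)) (x - y) * gaussKernel d (s ^ (2 * γ₂)) y)
        ≤ (2 : ℝ) ^ ((d : ℝ) * (γ₂ - 1 / 2)) * gaussKernel d ((t + s) ^ (2 * γ₂)) x) :=
  gaussian_reference_kernel_general d G γ₁ γ₂ hγ₂ hscal hbdd C₀ σ hC₀ hσ
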